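/- Every decomposition rule and every equality rule of the tableau system TC_SCI is sound: for each such rule with premise set Φ and conclusion sets Ψ₁, …, Ψₙ, and for every finite set X ⊆ LF ∪ Id (with the labels introduced by decomposition rules fresh, i.e., not occurring in X ∪ Φ), the set X ∪ Φ is SCI-satisfiable if and only if X ∪ Φ ∪ Ψᵢ is SCI-satisfiable for some i ∈ {1, …, n}. -/
import Mathlib


/-- SCI-formulas: atoms, negation, implication, and the identity connective. -/
inductive SCIForm : Type
  | atom : ℕ → SCIForm
  | not : SCIForm → SCIForm
  | imp : SCIForm → SCIForm → SCIForm
  | idn : SCIForm → SCIForm → SCIForm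
  deriving DecidableEq

/-- An SCI-structure over a carrier type `U`: a set of designated values and
operations interpreting ¬, →, ≡. -/
structure SCIStruct (U : Type) where
  D : Set U
  neg : U → U
  imp : U → U → U
  idn : U → U → U

/-- `M` is an SCI-model: `U` is non-empty, `D` is a proper subset of `U`, and the
three semantic conditions hold. -/
def IsSCIModel {U : Type} (M : SCIStruct U) : Prop :=
  Nonempty U ∧ M.D ≠ Set.univ ∧
  (∀ a : U, M.neg a ∈ M.D ↔ a ∉ M.D) ∧
  (∀ a b : U, M.imp a b ∈ M.D ↔ (a ∉ M.D ∨ b ∈ M.D)) ∧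
  (∀ a b : U, M.idn a b ∈ M.D ↔ a = b)

/-- A valuation in an SCI-structure: a homomorphism from formulas to `U`. -/
def IsValuation {U : Type} (M : SCIStruct U) (V : SCIForm → U) : Prop :=
  (∀ φ, V (SCIForm.not φ) = M.neg (V φ)) ∧
  (∀ φ ψ, V (SCIForm.imp φ ψ) = M.imp (V φ) (V ψ)) ∧
  (∀ φ ψ, V (SCIForm.idn φ ψ) = M.idn (V φ) (V ψ))

/-- A formula is SCI-satisfiable if its denotation is designated in some
SCI-model under some valuation. -/
def SCISatisfiable (φ : SCIForm) : Prop :=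
  ∃ (U : Type) (M : SCIStruct U) (V : SCIForm → U),
    IsSCIModel M ∧ IsValuation M V ∧ V φ ∈ M.D

/-- A formula is SCI-valid if its denotation is designated in every SCI-model
under every valuation. -/
def SCIValid (φ : SCIForm) : Prop :=
  ∀ (U : Type) (M : SCIStruct U) (V : SCIForm → U),
    IsSCIModel M → IsValuation M V → V φ ∈ M.D

/-- Labels: a Boolean polarity (`true` = the set L⁺, `false` = the set L⁻)
together with a natural number index; L⁺ and L⁻ are disjoint and countably
infinite. -/
abbrev Label : Type := Bool × ℕ

/-- `w` belongs to L⁺. -/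
def posL (w : Label) : Prop := w.1 = true

/-- `w` belongs to L⁻. -/
def negL (w : Label) : Prop := w.1 = false

/-- Expressions occurring on tableau branches: labelled formulas `w : φ`,
equalities `w = v`, inequalities `w ≠ v`, and the closure symbol ⊥. -/
inductive Node : Type
  | lf : Label → SCIForm → Node
  | eq : Label → Label → Node
  | neq : Label → Label → Node
  | bot : Node
  deriving DecidableEq

/-- A label occurs in a set of labelled formulas and (in)equality expressions. -/
def occursIn (w : Label) (S : Set Node) : Prop :=
  (∃ φ, Node.lf w φ ∈ S) ∨
  (∃ v, Node.eq w v ∈ S ∨ Node.eq v w ∈ S ∨ Node.neq w v ∈ S ∨ Node.neq v w ∈ S)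

/-- A set of labelled formulas and (in)equality expressions is satisfied in an
SCI-model `M` by a valuation `V` and a function `f` from labels to the universe. -/
def SatNodeSet {U : Type} (S : Set Node) (M : SCIStruct U) (V : SCIForm → U)
    (f : Label → U) : Prop :=
  IsSCIModel M ∧ IsValuation M V ∧
  (∀ w φ, Node.lf w φ ∈ S → V φ = f w) ∧
  (∀ w, occursIn w S → (f w ∈ M.D ↔ posL w)) ∧
  (∀ w v, Node.eq w v ∈ S → f w = f v) ∧
  (∀ w v, Node.neq w v ∈ S → f w ≠ f v)

/-- A set of labelled formulas and (in)equality expressions is SCI-satisfiable. -/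
def NodeSetSatisfiable (S : Set Node) : Prop :=
  ∃ (U : Type) (M : SCIStruct U) (V : SCIForm → U) (f : Label → U),
    SatNodeSet S M V f

lemma occ_mono {w : Label} {S T : Set Node} (h : S ⊆ T) (hw : occursIn w S) :
    occursIn w T := by
  rcases hw with ⟨φ, hφ⟩ | ⟨v, hv | hv | hv | hv⟩
  · exact Or.inl ⟨φ, h hφ⟩
  · exact Or.inr ⟨v, Or.inl (h hv)⟩
  · exact Or.inr ⟨v, Or.inr (Or.inl (h hv))⟩
  · exact Or.inr ⟨v, Or.inr (Or.inr (Or.inl (h hv)))⟩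
  · exact Or.inr ⟨v, Or.inr (Or.inr (Or.inr (h hv)))⟩

lemma sat_mono {U : Type} {S T : Set Node} {M : SCIStruct U} {V : SCIForm → U}
    {f : Label → U} (h : S ⊆ T) (hT : SatNodeSet T M V f) : SatNodeSet S M V f := by
  obtain ⟨h1, h2, h3, h4, h5, h6⟩ := hT
  exact ⟨h1, h2, fun w φ hw => h3 w φ (h hw), fun w hw => h4 w (occ_mono h hw),
    fun w v hw => h5 w v (h hw), fun w v hw => h6 w v (h hw)⟩

lemma satis_mono {S T : Set Node} (h : S ⊆ T) :
    NodeSetSatisfiable T → NodeSetSatisfiable S := by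
  rintro ⟨U, M, V, f, hT⟩; exact ⟨U, M, V, f, sat_mono h hT⟩

lemma occ_union {w : Label} {S T : Set Node} :
    occursIn w (S ∪ T) ↔ occursIn w S ∨ occursIn w T := by
  constructor
  · rintro (⟨φ, h | h⟩ | ⟨v, (h | h) | ((h | h) | ((h | h) | (h | h)))⟩) <;>
    first
      | exact Or.inl (Or.inl ⟨_, h⟩)
      | exact Or.inr (Or.inl ⟨_, h⟩)
      | exact Or.inl (Or.inr ⟨_, Or.inl h⟩)
      | exact Or.inr (Or.inr ⟨_, Or.inl h⟩)
      | exact Or.inl (Or.inr ⟨_, Or.inr (Or.inl h)⟩)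
      | exact Or.inr (Or.inr ⟨_, Or.inr (Or.inl h)⟩)
      | exact Or.inl (Or.inr ⟨_, Or.inr (Or.inr (Or.inl h))⟩)
      | exact Or.inr (Or.inr ⟨_, Or.inr (Or.inr (Or.inl h))⟩)
      | exact Or.inl (Or.inr ⟨_, Or.inr (Or.inr (Or.inr h))⟩)
      | exact Or.inr (Or.inr ⟨_, Or.inr (Or.inr (Or.inr h))⟩)
  · rintro (h | h)
    exacts [occ_mono Set.subset_union_left h, occ_mono Set.subset_union_right h]

lemma sat_union {U : Type} {S T : Set Node} {M : SCIStruct U} {V : SCIForm → U}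
    {f : Label → U} :
    SatNodeSet (S ∪ T) M V f ↔ SatNodeSet S M V f ∧ SatNodeSet T M V f := by
  constructor
  · intro h
    exact ⟨sat_mono Set.subset_union_left h, sat_mono Set.subset_union_right h⟩
  · rintro ⟨⟨a1, a2, a3, a4, a5, a6⟩, ⟨b1, b2, b3, b4, b5, b6⟩⟩
    refine ⟨a1, a2, ?_, ?_, ?_, ?_⟩
    · rintro w φ (h | h)
      exacts [a3 w φ h, b3 w φ h]
    · intro w hw
      rcases occ_union.1 hw with h | h
      exacts [a4 w h, b4 w h]
    · rintro w v (h | h)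
      exacts [a5 w v h, b5 w v h]
    · rintro w v (h | h)
      exacts [a6 w v h, b6 w v h]

lemma sat_agree {U : Type} {S : Set Node} {M : SCIStruct U} {V : SCIForm → U}
    {f f' : Label → U} (h : SatNodeSet S M V f)
    (hag : ∀ x, occursIn x S → f' x = f x) : SatNodeSet S M V f' := by
  obtain ⟨h1, h2, h3, h4, h5, h6⟩ := h
  refine ⟨h1, h2, ?_, ?_, ?_, ?_⟩
  · intro w φ hw; rw [hag w (Or.inl ⟨φ, hw⟩)]; exact h3 w φ hw
  · intro w hw; rw [hag w hw]; exact h4 w hw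
  · intro w v hw
    rw [hag w (Or.inr ⟨v, Or.inl hw⟩), hag v (Or.inr ⟨w, Or.inr (Or.inl hw)⟩)]
    exact h5 w v hw
  · intro w v hw
    rw [hag w (Or.inr ⟨v, Or.inr (Or.inr (Or.inl hw))⟩),
      hag v (Or.inr ⟨w, Or.inr (Or.inr (Or.inr hw))⟩)]
    exact h6 w v hw

lemma sat_update {U : Type} {S : Set Node} {M : SCIStruct U} {V : SCIForm → U}
    {f : Label → U} {v : Label} {a : U} (h : SatNodeSet S M V f)
    (hv : ¬ occursIn v S) : SatNodeSet S M V (Function.update f v a) :=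
  sat_agree h (fun x hx => Function.update_of_ne (by rintro rfl; exact hv hx) _ _)
lemma sat_pair {U : Type} {M : SCIStruct U} {V : SCIForm → U} {f : Label → U}
    (hM : IsSCIModel M) (hV : IsValuation M V) {v u : Label} {φ ψ : SCIForm}
    (h1 : V φ = f v) (h2 : V ψ = f u)
    (hv : f v ∈ M.D ↔ posL v) (hu : f u ∈ M.D ↔ posL u) :
    SatNodeSet {Node.lf v φ, Node.lf u ψ} M V f := by
  refine ⟨hM, hV, ?_, ?_, ?_, ?_⟩
  · intro a χ ha
    rcases ha with ha | ha
    · obtain ⟨rfl, rfl⟩ := Node.lf.inj ha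
      exact h1
    · obtain ⟨rfl, rfl⟩ := Node.lf.inj ha
      exact h2
  · intro x hx
    have : x = v ∨ x = u := by
      rcases hx with ⟨χ, hχ | hχ⟩ | ⟨y, h | h | h | h⟩ <;>
        first
          | (exact Or.inl (Node.lf.inj hχ).1)
          | (exact Or.inr (Node.lf.inj hχ).1)
          | (rcases h with h | h <;> exact absurd h (by simp))
    rcases this with rfl | rfl
    exacts [hv, hu]
  · intro a b hab
    rcases hab with h | h <;> exact absurd h (by simp)
  · intro a b hab
    rcases hab with h | h <;> exact absurd h (by simp)
lemma sat_pair_eq {U : Type} {M : SCIStruct U} {V : SCIForm → U} {f : Label → U}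
    (hM : IsSCIModel M) (hV : IsValuation M V) {v u : Label} {φ ψ : SCIForm}
    (h1 : V φ = f v) (h2 : V ψ = f u)
    (hv : f v ∈ M.D ↔ posL v) (hu : f u ∈ M.D ↔ posL u) (hvu : f v = f u) :
    SatNodeSet {Node.lf v φ, Node.lf u ψ, Node.eq v u} M V f := by
  refine ⟨hM, hV, ?_, ?_, ?_, ?_⟩
  · intro a χ ha
    rcases ha with ha | ha | ha
    · obtain ⟨rfl, rfl⟩ := Node.lf.inj ha
      exact h1
    · obtain ⟨rfl, rfl⟩ := Node.lf.inj ha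
      exact h2
    · exact absurd ha (by simp)
  · intro x hx
    have : x = v ∨ x = u := by
      rcases hx with ⟨χ, hχ | hχ | hχ⟩ | ⟨y, h | h | h | h⟩ <;>
        first
          | (exact Or.inl (Node.lf.inj hχ).1)
          | (exact Or.inr (Node.lf.inj hχ).1)
          | (exact absurd hχ (by simp))
          | (rcases h with h | h | h <;>
              first
                | (exact Or.inl (Node.eq.inj h).1)
                | (exact Or.inr (Node.eq.inj h).2)
                | (exact absurd h (by simp)))
    rcases this with rfl | rfl
    exacts [hv, hu]
  · intro a b hab
    rcases hab with h | h | h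
    · exact absurd h (by simp)
    · exact absurd h (by simp)
    · obtain ⟨rfl, rfl⟩ := Node.eq.inj h
      exact hvu
  · intro a b hab
    rcases hab with h | h | h <;> exact absurd h (by simp)

lemma sat_pair_neq {U : Type} {M : SCIStruct U} {V : SCIForm → U} {f : Label → U}
    (hM : IsSCIModel M) (hV : IsValuation M V) {v u : Label} {φ ψ : SCIForm}
    (h1 : V φ = f v) (h2 : V ψ = f u)
    (hv : f v ∈ M.D ↔ posL v) (hu : f u ∈ M.D ↔ posL u) (hvu : f v ≠ f u) :
    SatNodeSet {Node.lf v φ, Node.lf u ψ, Node.neq v u} M V f := by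
  refine ⟨hM, hV, ?_, ?_, ?_, ?_⟩
  · intro a χ ha
    rcases ha with ha | ha | ha
    · obtain ⟨rfl, rfl⟩ := Node.lf.inj ha
      exact h1
    · obtain ⟨rfl, rfl⟩ := Node.lf.inj ha
      exact h2
    · exact absurd ha (by simp)
  · intro x hx
    have : x = v ∨ x = u := by
      rcases hx with ⟨χ, hχ | hχ | hχ⟩ | ⟨y, h | h | h | h⟩ <;>
        first
          | (exact Or.inl (Node.lf.inj hχ).1)
          | (exact Or.inr (Node.lf.inj hχ).1)
          | (exact absurd hχ (by simp))
          | (rcases h with h | h | h <;>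
              first
                | (exact Or.inl (Node.neq.inj h).1)
                | (exact Or.inr (Node.neq.inj h).2)
                | (exact absurd h (by simp)))
    rcases this with rfl | rfl
    exacts [hv, hu]
  · intro a b hab
    rcases hab with h | h | h <;> exact absurd h (by simp)
  · intro a b hab
    rcases hab with h | h | h
    · exact absurd h (by simp)
    · exact absurd h (by simp)
    · obtain ⟨rfl, rfl⟩ := Node.neq.inj h
      exact hvu

lemma sat_add_eq {U : Type} {S : Set Node} {M : SCIStruct U} {V : SCIForm → U}
    {f : Label → U} (hS : SatNodeSet S M V f) {w v : Label}
    (hw : occursIn w S) (hv : occursIn v S) (h : f w = f v) :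
    SatNodeSet (S ∪ {Node.eq w v}) M V f := by
  refine sat_union.2 ⟨hS, ⟨hS.1, hS.2.1, ?_, ?_, ?_, ?_⟩⟩
  · intro a χ ha
    exact absurd ha (by simp)
  · intro x hx
    have : x = w ∨ x = v := by
      rcases hx with ⟨χ, hχ⟩ | ⟨y, hy | hy | hy | hy⟩ <;>
        first
          | (exact Or.inl (Node.eq.inj hy).1)
          | (exact Or.inr (Node.eq.inj hy).2)
          | (exact absurd hχ (by simp))
          | (exact absurd hy (by simp))
    rcases this with rfl | rfl
    exacts [hS.2.2.2.1 _ hw, hS.2.2.2.1 _ hv]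
  · intro a b hab
    obtain ⟨rfl, rfl⟩ := Node.eq.inj hab
    exact h
  · intro a b hab
    exact absurd hab (by simp)
lemma sat_single {U : Type} {M : SCIStruct U} {V : SCIForm → U} {f : Label → U}
    (hM : IsSCIModel M) (hV : IsValuation M V) {v : Label} {φ : SCIForm}
    (h1 : V φ = f v) (hv : f v ∈ M.D ↔ posL v) :
    SatNodeSet {Node.lf v φ} M V f := by
  refine ⟨hM, hV, ?_, ?_, ?_, ?_⟩
  · intro a χ ha
    obtain ⟨rfl, rfl⟩ := Node.lf.inj ha
    exact h1
  · intro x hx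
    have : x = v := by
      rcases hx with ⟨χ, hχ⟩ | ⟨y, h | h | h | h⟩ <;>
        first
          | (exact (Node.lf.inj hχ).1)
          | (exact absurd h (by simp))
    subst this
    exact hv
  · intro a b hab
    exact absurd hab (by simp)
  · intro a b hab
    exact absurd hab (by simp)
/-- every decomposition rule and every equality rule of TC_SCI is
sound: for every finite set X ⊆ LF ∪ Id (labels introduced by decomposition
rules being fresh, i.e., not occurring in X ∪ Φ), the set X ∪ Φ is
SCI-satisfiable iff X ∪ Φ ∪ Ψᵢ is SCI-satisfiable for some conclusion set Ψᵢ.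
The conjuncts below treat, in order, the rules
(¬⁺), (¬⁻), (→⁺), (→⁻), (≡⁺), (≡⁻), (≡¬), (≡→), (≡≡), (F), (sym), (tran). -/
theorem stmt_2 :
    (∀ (X : Set Node), X.Finite → Node.bot ∉ X → ∀ (w v : Label) (φ : SCIForm),
      posL w → negL v → ¬ occursIn v (X ∪ {Node.lf w (SCIForm.not φ)}) →
      (NodeSetSatisfiable (X ∪ {Node.lf w (SCIForm.not φ)}) ↔
        NodeSetSatisfiable (X ∪ {Node.lf w (SCIForm.not φ)} ∪ {Node.lf v φ}))) ∧
    (∀ (X : Set Node), X.Finite → Node.bot ∉ X → ∀ (w v : Label) (φ : SCIForm),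
      negL w → posL v → ¬ occursIn v (X ∪ {Node.lf w (SCIForm.not φ)}) →
      (NodeSetSatisfiable (X ∪ {Node.lf w (SCIForm.not φ)}) ↔
        NodeSetSatisfiable (X ∪ {Node.lf w (SCIForm.not φ)} ∪ {Node.lf v φ}))) ∧
    (∀ (X : Set Node), X.Finite → Node.bot ∉ X →
      ∀ (w vn un vp up : Label) (φ ψ : SCIForm),
      posL w → negL vn → negL un → posL vp → posL up →
      [vn, un, vp, up].Pairwise (· ≠ ·) →
      ¬ occursIn vn (X ∪ {Node.lf w (SCIForm.imp φ ψ)}) →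
      ¬ occursIn un (X ∪ {Node.lf w (SCIForm.imp φ ψ)}) →
      ¬ occursIn vp (X ∪ {Node.lf w (SCIForm.imp φ ψ)}) →
      ¬ occursIn up (X ∪ {Node.lf w (SCIForm.imp φ ψ)}) →
      (NodeSetSatisfiable (X ∪ {Node.lf w (SCIForm.imp φ ψ)}) ↔
        (NodeSetSatisfiable (X ∪ {Node.lf w (SCIForm.imp φ ψ)} ∪ {Node.lf vn φ, Node.lf un ψ}) ∨
         NodeSetSatisfiable (X ∪ {Node.lf w (SCIForm.imp φ ψ)} ∪ {Node.lf vn φ, Node.lf up ψ}) ∨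
         NodeSetSatisfiable (X ∪ {Node.lf w (SCIForm.imp φ ψ)} ∪ {Node.lf vp φ, Node.lf up ψ})))) ∧
    (∀ (X : Set Node), X.Finite → Node.bot ∉ X →
      ∀ (w vp un : Label) (φ ψ : SCIForm),
      negL w → posL vp → negL un → vp ≠ un →
      ¬ occursIn vp (X ∪ {Node.lf w (SCIForm.imp φ ψ)}) →
      ¬ occursIn un (X ∪ {Node.lf w (SCIForm.imp φ ψ)}) →
      (NodeSetSatisfiable (X ∪ {Node.lf w (SCIForm.imp φ ψ)}) ↔
        NodeSetSatisfiable (X ∪ {Node.lf w (SCIForm.imp φ ψ)} ∪ {Node.lf vp φ, Node.lf un ψ}))) ∧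
    (∀ (X : Set Node), X.Finite → Node.bot ∉ X →
      ∀ (w vp up vn un : Label) (φ ψ : SCIForm),
      posL w → posL vp → posL up → negL vn → negL un →
      [vp, up, vn, un].Pairwise (· ≠ ·) →
      ¬ occursIn vp (X ∪ {Node.lf w (SCIForm.idn φ ψ)}) →
      ¬ occursIn up (X ∪ {Node.lf w (SCIForm.idn φ ψ)}) →
      ¬ occursIn vn (X ∪ {Node.lf w (SCIForm.idn φ ψ)}) →
      ¬ occursIn un (X ∪ {Node.lf w (SCIForm.idn φ ψ)}) →
      (NodeSetSatisfiable (X ∪ {Node.lf w (SCIForm.idn φ ψ)}) ↔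
        (NodeSetSatisfiable (X ∪ {Node.lf w (SCIForm.idn φ ψ)} ∪
            {Node.lf vp φ, Node.lf up ψ, Node.eq vp up}) ∨
         NodeSetSatisfiable (X ∪ {Node.lf w (SCIForm.idn φ ψ)} ∪
            {Node.lf vn φ, Node.lf un ψ, Node.eq vn un})))) ∧
    (∀ (X : Set Node), X.Finite → Node.bot ∉ X →
      ∀ (w vp up vn un : Label) (φ ψ : SCIForm),
      negL w → posL vp → posL up → negL vn → negL un →
      [vp, up, vn, un].Pairwise (· ≠ ·) →
      ¬ occursIn vp (X ∪ {Node.lf w (SCIForm.idn φ ψ)}) →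
      ¬ occursIn up (X ∪ {Node.lf w (SCIForm.idn φ ψ)}) →
      ¬ occursIn vn (X ∪ {Node.lf w (SCIForm.idn φ ψ)}) →
      ¬ occursIn un (X ∪ {Node.lf w (SCIForm.idn φ ψ)}) →
      (NodeSetSatisfiable (X ∪ {Node.lf w (SCIForm.idn φ ψ)}) ↔
        (NodeSetSatisfiable (X ∪ {Node.lf w (SCIForm.idn φ ψ)} ∪
            {Node.lf vp φ, Node.lf up ψ, Node.neq vp up}) ∨
         NodeSetSatisfiable (X ∪ {Node.lf w (SCIForm.idn φ ψ)} ∪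
            {Node.lf vp φ, Node.lf un ψ}) ∨
         NodeSetSatisfiable (X ∪ {Node.lf w (SCIForm.idn φ ψ)} ∪
            {Node.lf vn φ, Node.lf up ψ}) ∨
         NodeSetSatisfiable (X ∪ {Node.lf w (SCIForm.idn φ ψ)} ∪
            {Node.lf vn φ, Node.lf un ψ, Node.neq vn un})))) ∧
    (∀ (X : Set Node), X.Finite → Node.bot ∉ X →
      ∀ (w v u y : Label) (φ ψ : SCIForm),
      (NodeSetSatisfiable (X ∪ {Node.lf w φ, Node.lf v ψ, Node.eq w v,
          Node.lf u (SCIForm.not φ), Node.lf y (SCIForm.not ψ)}) ↔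
        NodeSetSatisfiable (X ∪ {Node.lf w φ, Node.lf v ψ, Node.eq w v,
          Node.lf u (SCIForm.not φ), Node.lf y (SCIForm.not ψ)} ∪ {Node.eq u y}))) ∧
    (∀ (X : Set Node), X.Finite → Node.bot ∉ X →
      ∀ (w v w' v' x z : Label) (φ ψ χ θ : SCIForm),
      (NodeSetSatisfiable (X ∪ {Node.lf w φ, Node.lf v ψ, Node.eq w v,
          Node.lf w' χ, Node.lf v' θ, Node.eq w' v',
          Node.lf x (SCIForm.imp φ χ), Node.lf z (SCIForm.imp ψ θ)}) ↔
        NodeSetSatisfiable (X ∪ {Node.lf w φ, Node.lf v ψ, Node.eq w v,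
          Node.lf w' χ, Node.lf v' θ, Node.eq w' v',
          Node.lf x (SCIForm.imp φ χ), Node.lf z (SCIForm.imp ψ θ)} ∪ {Node.eq x z}))) ∧
    (∀ (X : Set Node), X.Finite → Node.bot ∉ X →
      ∀ (w v w' v' x z : Label) (φ ψ χ θ : SCIForm),
      (NodeSetSatisfiable (X ∪ {Node.lf w φ, Node.lf v ψ, Node.eq w v,
          Node.lf w' χ, Node.lf v' θ, Node.eq w' v',
          Node.lf x (SCIForm.idn φ χ), Node.lf z (SCIForm.idn ψ θ)}) ↔
        NodeSetSatisfiable (X ∪ {Node.lf w φ, Node.lf v ψ, Node.eq w v,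
          Node.lf w' χ, Node.lf v' θ, Node.eq w' v',
          Node.lf x (SCIForm.idn φ χ), Node.lf z (SCIForm.idn ψ θ)} ∪ {Node.eq x z}))) ∧
    (∀ (X : Set Node), X.Finite → Node.bot ∉ X →
      ∀ (w v : Label) (φ : SCIForm),
      (NodeSetSatisfiable (X ∪ {Node.lf w φ, Node.lf v φ}) ↔
        NodeSetSatisfiable (X ∪ {Node.lf w φ, Node.lf v φ} ∪ {Node.eq w v}))) ∧
    (∀ (X : Set Node), X.Finite → Node.bot ∉ X → ∀ (w v : Label),
      (NodeSetSatisfiable (X ∪ {Node.eq w v}) ↔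
        NodeSetSatisfiable (X ∪ {Node.eq w v} ∪ {Node.eq v w}))) ∧
    (∀ (X : Set Node), X.Finite → Node.bot ∉ X → ∀ (w v u : Label),
      (NodeSetSatisfiable (X ∪ {Node.eq w v, Node.eq v u}) ↔
        NodeSetSatisfiable (X ∪ {Node.eq w v, Node.eq v u} ∪ {Node.eq w u}))) := by
  refine ⟨?_, ?_, ?_, ?_, ?_, ?_, ?_, ?_, ?_, ?_, ?_, ?_⟩
  -- (¬⁺)
  · intro X _ _ w v φ hw hv hfv
    constructor
    · rintro ⟨U, M, V, f, hS⟩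
      have hmem : Node.lf w (SCIForm.not φ) ∈ X ∪ {Node.lf w (SCIForm.not φ)} :=
        Set.mem_union_right _ rfl
      have hlf : V (SCIForm.not φ) = f w := hS.2.2.1 _ _ hmem
      have hwD : f w ∈ M.D := (hS.2.2.2.1 w (Or.inl ⟨_, hmem⟩)).2 hw
      have hnφ : V φ ∉ M.D := (hS.1.2.2.1 (V φ)).1
        (by rw [← hS.2.1.1 φ, hlf]; exact hwD)
      refine ⟨U, M, V, Function.update f v (V φ),
        sat_union.2 ⟨sat_update hS hfv, sat_single hS.1 hS.2.1 ?_ ?_⟩⟩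
      · rw [Function.update_self]
      · rw [Function.update_self]
        simp [posL, hnφ]
        exact hv
    · exact satis_mono Set.subset_union_left
  -- (¬⁻)
  · intro X _ _ w v φ hw hv hfv
    constructor
    · rintro ⟨U, M, V, f, hS⟩
      have hmem : Node.lf w (SCIForm.not φ) ∈ X ∪ {Node.lf w (SCIForm.not φ)} :=
        Set.mem_union_right _ rfl
      have hlf : V (SCIForm.not φ) = f w := hS.2.2.1 _ _ hmem
      have hwD : f w ∉ M.D := fun h => by
        have := (hS.2.2.2.1 w (Or.inl ⟨_, hmem⟩)).1 h
        rw [posL, hw] at this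
        exact Bool.noConfusion this
      have hnφ : V φ ∈ M.D := by
        by_contra hc
        exact hwD (by rw [← hlf, hS.2.1.1 φ]; exact (hS.1.2.2.1 (V φ)).2 hc)
      refine ⟨U, M, V, Function.update f v (V φ),
        sat_union.2 ⟨sat_update hS hfv, sat_single hS.1 hS.2.1 ?_ ?_⟩⟩
      · rw [Function.update_self]
      · rw [Function.update_self]
        simp [posL, hnφ]
        exact hv
    · exact satis_mono Set.subset_union_left
  -- (→⁺)
  · intro X _ _ w vn un vp up φ ψ hw hvn hun hvp hup hpw hfvn hfun hfvp hfup
    simp only [List.pairwise_cons, List.mem_cons, List.mem_singleton,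
      List.not_mem_nil, List.Pairwise.nil, forall_eq_or_imp, forall_eq] at hpw
    obtain ⟨⟨h12, h13, h14, -⟩, ⟨h23, h24, -⟩, ⟨h34, -⟩, -⟩ := hpw
    constructor
    · rintro ⟨U, M, V, f, hS⟩
      have hmem : Node.lf w (SCIForm.imp φ ψ) ∈ X ∪ {Node.lf w (SCIForm.imp φ ψ)} :=
        Set.mem_union_right _ rfl
      have hlf : V (SCIForm.imp φ ψ) = f w := hS.2.2.1 _ _ hmem
      have hwD : f w ∈ M.D := (hS.2.2.2.1 w (Or.inl ⟨_, hmem⟩)).2 hw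
      have himp : V φ ∉ M.D ∨ V ψ ∈ M.D := (hS.1.2.2.2.1 (V φ) (V ψ)).1
        (by rw [← hS.2.1.2.1 φ ψ, hlf]; exact hwD)
      by_cases hφ : V φ ∈ M.D
      · have hψ : V ψ ∈ M.D := himp.resolve_left (not_not.2 hφ)
        refine Or.inr (Or.inr ⟨U, M, V, Function.update (Function.update f vp (V φ)) up (V ψ),
          sat_union.2 ⟨sat_update (sat_update hS hfvp) hfup,
            sat_pair hS.1 hS.2.1 ?_ ?_ ?_ ?_⟩⟩)
        · rw [Function.update_of_ne h34, Function.update_self]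
        · rw [Function.update_self]
        · rw [Function.update_of_ne h34, Function.update_self]
          simp [posL, hφ]
          exact hvp
        · rw [Function.update_self]
          simp [posL, hψ]
          exact hup
      · by_cases hψ : V ψ ∈ M.D
        · refine Or.inr (Or.inl ⟨U, M, V, Function.update (Function.update f vn (V φ)) up (V ψ),
            sat_union.2 ⟨sat_update (sat_update hS hfvn) hfup,
              sat_pair hS.1 hS.2.1 ?_ ?_ ?_ ?_⟩⟩)
          · rw [Function.update_of_ne h14, Function.update_self]
          · rw [Function.update_self]
          · rw [Function.update_of_ne h14, Function.update_self]
            simp [posL, hφ]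
            exact hvn
          · rw [Function.update_self]
            simp [posL, hψ]
            exact hup
        · refine Or.inl ⟨U, M, V, Function.update (Function.update f vn (V φ)) un (V ψ),
            sat_union.2 ⟨sat_update (sat_update hS hfvn) hfun,
              sat_pair hS.1 hS.2.1 ?_ ?_ ?_ ?_⟩⟩
          · rw [Function.update_of_ne h12, Function.update_self]
          · rw [Function.update_self]
          · rw [Function.update_of_ne h12, Function.update_self]
            simp [posL, hφ]
            exact hvn
          · rw [Function.update_self]
            simp [posL, hψ]
            exact hun
    · rintro (h | h | h) <;> exact satis_mono Set.subset_union_left h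
  -- (→⁻)
  · intro X _ _ w vp un φ ψ hw hvp hun hvpun hfvp hfun
    constructor
    · rintro ⟨U, M, V, f, hS⟩
      have hmem : Node.lf w (SCIForm.imp φ ψ) ∈ X ∪ {Node.lf w (SCIForm.imp φ ψ)} :=
        Set.mem_union_right _ rfl
      have hlf : V (SCIForm.imp φ ψ) = f w := hS.2.2.1 _ _ hmem
      have hwD : f w ∉ M.D := fun h => by
        have := (hS.2.2.2.1 w (Or.inl ⟨_, hmem⟩)).1 h
        rw [posL, hw] at this
        exact Bool.noConfusion this
      have hnd : ¬(V φ ∉ M.D ∨ V ψ ∈ M.D) := fun hc =>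
        hwD (by rw [← hlf, hS.2.1.2.1 φ ψ]; exact (hS.1.2.2.2.1 (V φ) (V ψ)).2 hc)
      have hφ : V φ ∈ M.D := not_not.1 fun h => hnd (Or.inl h)
      have hψ : V ψ ∉ M.D := fun h => hnd (Or.inr h)
      refine ⟨U, M, V, Function.update (Function.update f vp (V φ)) un (V ψ),
        sat_union.2 ⟨sat_update (sat_update hS hfvp) hfun,
          sat_pair hS.1 hS.2.1 ?_ ?_ ?_ ?_⟩⟩
      · rw [Function.update_of_ne hvpun, Function.update_self]
      · rw [Function.update_self]
      · rw [Function.update_of_ne hvpun, Function.update_self]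
        simp [posL, hφ]
        exact hvp
      · rw [Function.update_self]
        simp [posL, hψ]
        exact hun
    · exact satis_mono Set.subset_union_left
  -- (≡⁺)
  · intro X _ _ w vp up vn un φ ψ hw hvp hup hvn hun hpw hfvp hfup hfvn hfun
    simp only [List.pairwise_cons, List.mem_cons, List.mem_singleton,
      List.not_mem_nil, List.Pairwise.nil, forall_eq_or_imp, forall_eq] at hpw
    obtain ⟨⟨h12, h13, h14, -⟩, ⟨h23, h24, -⟩, ⟨h34, -⟩, -⟩ := hpw
    constructor
    · rintro ⟨U, M, V, f, hS⟩
      have hmem : Node.lf w (SCIForm.idn φ ψ) ∈ X ∪ {Node.lf w (SCIForm.idn φ ψ)} :=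
        Set.mem_union_right _ rfl
      have hlf : V (SCIForm.idn φ ψ) = f w := hS.2.2.1 _ _ hmem
      have hwD : f w ∈ M.D := (hS.2.2.2.1 w (Or.inl ⟨_, hmem⟩)).2 hw
      have heq : V φ = V ψ := (hS.1.2.2.2.2 (V φ) (V ψ)).1
        (by rw [← hS.2.1.2.2 φ ψ, hlf]; exact hwD)
      by_cases hφ : V φ ∈ M.D
      · refine Or.inl ⟨U, M, V, Function.update (Function.update f vp (V φ)) up (V ψ),
          sat_union.2 ⟨sat_update (sat_update hS hfvp) hfup,
            sat_pair_eq hS.1 hS.2.1 ?_ ?_ ?_ ?_ ?_⟩⟩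
        · rw [Function.update_of_ne h12, Function.update_self]
        · rw [Function.update_self]
        · rw [Function.update_of_ne h12, Function.update_self]
          simp [posL, hφ]
          exact hvp
        · rw [Function.update_self]
          simp [posL, ← heq, hφ]
          exact hup
        · rw [Function.update_of_ne h12, Function.update_self, Function.update_self]
          exact heq
      · refine Or.inr ⟨U, M, V, Function.update (Function.update f vn (V φ)) un (V ψ),
          sat_union.2 ⟨sat_update (sat_update hS hfvn) hfun,
            sat_pair_eq hS.1 hS.2.1 ?_ ?_ ?_ ?_ ?_⟩⟩
        · rw [Function.update_of_ne h34, Function.update_self]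
        · rw [Function.update_self]
        · rw [Function.update_of_ne h34, Function.update_self]
          simp [posL, hφ]
          exact hvn
        · rw [Function.update_self]
          simp [posL, ← heq, hφ]
          exact hun
        · rw [Function.update_of_ne h34, Function.update_self, Function.update_self]
          exact heq
    · rintro (h | h) <;> exact satis_mono Set.subset_union_left h
  -- (≡⁻)
  · intro X _ _ w vp up vn un φ ψ hw hvp hup hvn hun hpw hfvp hfup hfvn hfun
    simp only [List.pairwise_cons, List.mem_cons, List.mem_singleton,
      List.not_mem_nil, List.Pairwise.nil, forall_eq_or_imp, forall_eq] at hpw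
    obtain ⟨⟨h12, h13, h14, -⟩, ⟨h23, h24, -⟩, ⟨h34, -⟩, -⟩ := hpw
    constructor
    · rintro ⟨U, M, V, f, hS⟩
      have hmem : Node.lf w (SCIForm.idn φ ψ) ∈ X ∪ {Node.lf w (SCIForm.idn φ ψ)} :=
        Set.mem_union_right _ rfl
      have hlf : V (SCIForm.idn φ ψ) = f w := hS.2.2.1 _ _ hmem
      have hwD : f w ∉ M.D := fun h => by
        have := (hS.2.2.2.1 w (Or.inl ⟨_, hmem⟩)).1 h
        rw [posL, hw] at this
        exact Bool.noConfusion this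
      have hne : V φ ≠ V ψ := fun h =>
        hwD (by rw [← hlf, hS.2.1.2.2 φ ψ]; exact (hS.1.2.2.2.2 (V φ) (V ψ)).2 h)
      by_cases hφ : V φ ∈ M.D <;> by_cases hψ : V ψ ∈ M.D
      · refine Or.inl ⟨U, M, V, Function.update (Function.update f vp (V φ)) up (V ψ),
          sat_union.2 ⟨sat_update (sat_update hS hfvp) hfup,
            sat_pair_neq hS.1 hS.2.1 ?_ ?_ ?_ ?_ ?_⟩⟩
        · rw [Function.update_of_ne h12, Function.update_self]
        · rw [Function.update_self]
        · rw [Function.update_of_ne h12, Function.update_self]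
          simp [posL, hφ]
          exact hvp
        · rw [Function.update_self]
          simp [posL, hψ]
          exact hup
        · rw [Function.update_of_ne h12, Function.update_self, Function.update_self]
          exact hne
      · refine Or.inr (Or.inl ⟨U, M, V, Function.update (Function.update f vp (V φ)) un (V ψ),
          sat_union.2 ⟨sat_update (sat_update hS hfvp) hfun,
            sat_pair hS.1 hS.2.1 ?_ ?_ ?_ ?_⟩⟩)
        · rw [Function.update_of_ne h14, Function.update_self]
        · rw [Function.update_self]
        · rw [Function.update_of_ne h14, Function.update_self]
          simp [posL, hφ]
          exact hvp
        · rw [Function.update_self]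
          simp [posL, hψ]
          exact hun
      · refine Or.inr (Or.inr (Or.inl ⟨U, M, V,
          Function.update (Function.update f vn (V φ)) up (V ψ),
          sat_union.2 ⟨sat_update (sat_update hS hfvn) hfup,
            sat_pair hS.1 hS.2.1 ?_ ?_ ?_ ?_⟩⟩))
        · rw [Function.update_of_ne (Ne.symm h23), Function.update_self]
        · rw [Function.update_self]
        · rw [Function.update_of_ne (Ne.symm h23), Function.update_self]
          simp [posL, hφ]
          exact hvn
        · rw [Function.update_self]
          simp [posL, hψ]
          exact hup
      · refine Or.inr (Or.inr (Or.inr ⟨U, M, V,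
          Function.update (Function.update f vn (V φ)) un (V ψ),
          sat_union.2 ⟨sat_update (sat_update hS hfvn) hfun,
            sat_pair_neq hS.1 hS.2.1 ?_ ?_ ?_ ?_ ?_⟩⟩))
        · rw [Function.update_of_ne h34, Function.update_self]
        · rw [Function.update_self]
        · rw [Function.update_of_ne h34, Function.update_self]
          simp [posL, hφ]
          exact hvn
        · rw [Function.update_self]
          simp [posL, hψ]
          exact hun
        · rw [Function.update_of_ne h34, Function.update_self, Function.update_self]
          exact hne
    · rintro (h | h | h | h) <;> exact satis_mono Set.subset_union_left h
  -- (≡¬)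
  · intro X _ _ w v u y φ ψ
    constructor
    · rintro ⟨U, M, V, f, hS⟩
      have m1 : Node.lf w φ ∈ X ∪ {Node.lf w φ, Node.lf v ψ, Node.eq w v,
          Node.lf u (SCIForm.not φ), Node.lf y (SCIForm.not ψ)} := by simp
      have m2 : Node.lf v ψ ∈ X ∪ {Node.lf w φ, Node.lf v ψ, Node.eq w v,
          Node.lf u (SCIForm.not φ), Node.lf y (SCIForm.not ψ)} := by simp
      have m3 : Node.eq w v ∈ X ∪ {Node.lf w φ, Node.lf v ψ, Node.eq w v,
          Node.lf u (SCIForm.not φ), Node.lf y (SCIForm.not ψ)} := by simp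
      have m4 : Node.lf u (SCIForm.not φ) ∈ X ∪ {Node.lf w φ, Node.lf v ψ, Node.eq w v,
          Node.lf u (SCIForm.not φ), Node.lf y (SCIForm.not ψ)} := by simp
      have m5 : Node.lf y (SCIForm.not ψ) ∈ X ∪ {Node.lf w φ, Node.lf v ψ, Node.eq w v,
          Node.lf u (SCIForm.not φ), Node.lf y (SCIForm.not ψ)} := by simp
      have key : f u = f y := by
        rw [← hS.2.2.1 _ _ m4, ← hS.2.2.1 _ _ m5, hS.2.1.1, hS.2.1.1,
          hS.2.2.1 _ _ m1, hS.2.2.1 _ _ m2, hS.2.2.2.2.1 _ _ m3]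
      exact ⟨U, M, V, f, sat_add_eq hS (Or.inl ⟨_, m4⟩) (Or.inl ⟨_, m5⟩) key⟩
    · exact satis_mono Set.subset_union_left
  -- (≡→)
  · intro X _ _ w v w' v' x z φ ψ χ θ
    constructor
    · rintro ⟨U, M, V, f, hS⟩
      have m1 : Node.lf w φ ∈ X ∪ {Node.lf w φ, Node.lf v ψ, Node.eq w v,
          Node.lf w' χ, Node.lf v' θ, Node.eq w' v',
          Node.lf x (SCIForm.imp φ χ), Node.lf z (SCIForm.imp ψ θ)} := by simp
      have m2 : Node.lf v ψ ∈ X ∪ {Node.lf w φ, Node.lf v ψ, Node.eq w v,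
          Node.lf w' χ, Node.lf v' θ, Node.eq w' v',
          Node.lf x (SCIForm.imp φ χ), Node.lf z (SCIForm.imp ψ θ)} := by simp
      have m3 : Node.eq w v ∈ X ∪ {Node.lf w φ, Node.lf v ψ, Node.eq w v,
          Node.lf w' χ, Node.lf v' θ, Node.eq w' v',
          Node.lf x (SCIForm.imp φ χ), Node.lf z (SCIForm.imp ψ θ)} := by simp
      have m4 : Node.lf w' χ ∈ X ∪ {Node.lf w φ, Node.lf v ψ, Node.eq w v,
          Node.lf w' χ, Node.lf v' θ, Node.eq w' v',
          Node.lf x (SCIForm.imp φ χ), Node.lf z (SCIForm.imp ψ θ)} := by simp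
      have m5 : Node.lf v' θ ∈ X ∪ {Node.lf w φ, Node.lf v ψ, Node.eq w v,
          Node.lf w' χ, Node.lf v' θ, Node.eq w' v',
          Node.lf x (SCIForm.imp φ χ), Node.lf z (SCIForm.imp ψ θ)} := by simp
      have m6 : Node.eq w' v' ∈ X ∪ {Node.lf w φ, Node.lf v ψ, Node.eq w v,
          Node.lf w' χ, Node.lf v' θ, Node.eq w' v',
          Node.lf x (SCIForm.imp φ χ), Node.lf z (SCIForm.imp ψ θ)} := by simp
      have m7 : Node.lf x (SCIForm.imp φ χ) ∈ X ∪ {Node.lf w φ, Node.lf v ψ, Node.eq w v,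
          Node.lf w' χ, Node.lf v' θ, Node.eq w' v',
          Node.lf x (SCIForm.imp φ χ), Node.lf z (SCIForm.imp ψ θ)} := by simp
      have m8 : Node.lf z (SCIForm.imp ψ θ) ∈ X ∪ {Node.lf w φ, Node.lf v ψ, Node.eq w v,
          Node.lf w' χ, Node.lf v' θ, Node.eq w' v',
          Node.lf x (SCIForm.imp φ χ), Node.lf z (SCIForm.imp ψ θ)} := by simp
      have e1 : V φ = V ψ := by
        rw [hS.2.2.1 _ _ m1, hS.2.2.1 _ _ m2, hS.2.2.2.2.1 _ _ m3]
      have e2 : V χ = V θ := by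
        rw [hS.2.2.1 _ _ m4, hS.2.2.1 _ _ m5, hS.2.2.2.2.1 _ _ m6]
      have key : f x = f z := by
        rw [← hS.2.2.1 _ _ m7, ← hS.2.2.1 _ _ m8, hS.2.1.2.1, hS.2.1.2.1, e1, e2]
      exact ⟨U, M, V, f, sat_add_eq hS (Or.inl ⟨_, m7⟩) (Or.inl ⟨_, m8⟩) key⟩
    · exact satis_mono Set.subset_union_left
  -- (≡≡)
  · intro X _ _ w v w' v' x z φ ψ χ θ
    constructor
    · rintro ⟨U, M, V, f, hS⟩
      have m1 : Node.lf w φ ∈ X ∪ {Node.lf w φ, Node.lf v ψ, Node.eq w v,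
          Node.lf w' χ, Node.lf v' θ, Node.eq w' v',
          Node.lf x (SCIForm.idn φ χ), Node.lf z (SCIForm.idn ψ θ)} := by simp
      have m2 : Node.lf v ψ ∈ X ∪ {Node.lf w φ, Node.lf v ψ, Node.eq w v,
          Node.lf w' χ, Node.lf v' θ, Node.eq w' v',
          Node.lf x (SCIForm.idn φ χ), Node.lf z (SCIForm.idn ψ θ)} := by simp
      have m3 : Node.eq w v ∈ X ∪ {Node.lf w φ, Node.lf v ψ, Node.eq w v,
          Node.lf w' χ, Node.lf v' θ, Node.eq w' v',
          Node.lf x (SCIForm.idn φ χ), Node.lf z (SCIForm.idn ψ θ)} := by simp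
      have m4 : Node.lf w' χ ∈ X ∪ {Node.lf w φ, Node.lf v ψ, Node.eq w v,
          Node.lf w' χ, Node.lf v' θ, Node.eq w' v',
          Node.lf x (SCIForm.idn φ χ), Node.lf z (SCIForm.idn ψ θ)} := by simp
      have m5 : Node.lf v' θ ∈ X ∪ {Node.lf w φ, Node.lf v ψ, Node.eq w v,
          Node.lf w' χ, Node.lf v' θ, Node.eq w' v',
          Node.lf x (SCIForm.idn φ χ), Node.lf z (SCIForm.idn ψ θ)} := by simp
      have m6 : Node.eq w' v' ∈ X ∪ {Node.lf w φ, Node.lf v ψ, Node.eq w v,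
          Node.lf w' χ, Node.lf v' θ, Node.eq w' v',
          Node.lf x (SCIForm.idn φ χ), Node.lf z (SCIForm.idn ψ θ)} := by simp
      have m7 : Node.lf x (SCIForm.idn φ χ) ∈ X ∪ {Node.lf w φ, Node.lf v ψ, Node.eq w v,
          Node.lf w' χ, Node.lf v' θ, Node.eq w' v',
          Node.lf x (SCIForm.idn φ χ), Node.lf z (SCIForm.idn ψ θ)} := by simp
      have m8 : Node.lf z (SCIForm.idn ψ θ) ∈ X ∪ {Node.lf w φ, Node.lf v ψ, Node.eq w v,
          Node.lf w' χ, Node.lf v' θ, Node.eq w' v',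
          Node.lf x (SCIForm.idn φ χ), Node.lf z (SCIForm.idn ψ θ)} := by simp
      have e1 : V φ = V ψ := by
        rw [hS.2.2.1 _ _ m1, hS.2.2.1 _ _ m2, hS.2.2.2.2.1 _ _ m3]
      have e2 : V χ = V θ := by
        rw [hS.2.2.1 _ _ m4, hS.2.2.1 _ _ m5, hS.2.2.2.2.1 _ _ m6]
      have key : f x = f z := by
        rw [← hS.2.2.1 _ _ m7, ← hS.2.2.1 _ _ m8, hS.2.1.2.2, hS.2.1.2.2, e1, e2]
      exact ⟨U, M, V, f, sat_add_eq hS (Or.inl ⟨_, m7⟩) (Or.inl ⟨_, m8⟩) key⟩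
    · exact satis_mono Set.subset_union_left
  -- (F)
  · intro X _ _ w v φ
    constructor
    · rintro ⟨U, M, V, f, hS⟩
      have m1 : Node.lf w φ ∈ X ∪ {Node.lf w φ, Node.lf v φ} := by simp
      have m2 : Node.lf v φ ∈ X ∪ {Node.lf w φ, Node.lf v φ} := by simp
      have key : f w = f v := by rw [← hS.2.2.1 _ _ m1, hS.2.2.1 _ _ m2]
      exact ⟨U, M, V, f, sat_add_eq hS (Or.inl ⟨_, m1⟩) (Or.inl ⟨_, m2⟩) key⟩
    · exact satis_mono Set.subset_union_left
  -- (sym)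
  · intro X _ _ w v
    constructor
    · rintro ⟨U, M, V, f, hS⟩
      have m1 : Node.eq w v ∈ X ∪ {Node.eq w v} := Set.mem_union_right _ rfl
      have key : f v = f w := (hS.2.2.2.2.1 _ _ m1).symm
      exact ⟨U, M, V, f, sat_add_eq hS (Or.inr ⟨w, Or.inr (Or.inl m1)⟩)
        (Or.inr ⟨v, Or.inl m1⟩) key⟩
    · exact satis_mono Set.subset_union_left
  -- (tran)
  · intro X _ _ w v u
    constructor
    · rintro ⟨U, M, V, f, hS⟩
      have m1 : Node.eq w v ∈ X ∪ {Node.eq w v, Node.eq v u} := by simp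
      have m2 : Node.eq v u ∈ X ∪ {Node.eq w v, Node.eq v u} := by simp
      have key : f w = f u := (hS.2.2.2.2.1 _ _ m1).trans (hS.2.2.2.2.1 _ _ m2)
      exact ⟨U, M, V, f, sat_add_eq hS (Or.inr ⟨v, Or.inl m1⟩)
        (Or.inr ⟨v, Or.inr (Or.inl m2)⟩) key⟩
    · exact satis_mono Set.subset_union_left
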